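/- Let g ≥ 2 and m ≥ 0 be integers and let a₃, …, a_{2g+2} be arbitrary complex numbers. Define the polynomial H_m(s,p,q) = p²·(1 − s·q²)·∏_{r=3}^{2g+2}(1 − a_r·q) − q^{2m} on ℂ³. Then: (i) if m ≥ 1, the set of points (s,p,q) ∈ ℂ³ at which H_m and all three partial derivatives ∂H_m/∂s, ∂H_m/∂p, ∂H_m/∂q vanish is exactly {(s, 0, 0) : s ∈ ℂ}; (ii) if m = 0, there is no point of ℂ³ at which H₀ and all three of its partial derivatives vanish. -/

import Mathlib

def IsCriticalZero (F : ℂ → ℂ → ℂ → ℂ) (s p q : ℂ) : Prop :=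
  F s p q = 0 ∧ deriv (fun s' => F s' p q) s = 0 ∧
    deriv (fun p' => F s p' q) p = 0 ∧ deriv (fun q' => F s p q') q = 0

lemma deriv_sq_mul_sub_const (c d p : ℂ) : deriv (fun p' : ℂ => p' ^ 2 * c - d) p = 2 * p * c := by
  rw [(((hasDerivAt_pow 2 p).mul_const c).sub_const d).deriv]
  ring

section SquareMinusPower

variable (C : ℂ → ℂ → ℂ) (n : ℕ)

local notation "F" => fun s p q => p ^ 2 * C s q - q ^ n

/-- `p ∂F/∂p = 2 p² C`, so at a critical zero `qⁿ = p² C = 0`. -/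
lemma pow_eq_zero_of_isCriticalZero {s p q : ℂ} (h : IsCriticalZero F s p q) : q ^ n = 0 := by
  obtain ⟨hF, -, hFp, -⟩ := h
  rw [deriv_sq_mul_sub_const] at hFp
  have hpC : p * C s q = 0 := by simpa using hFp
  linear_combination p * hpC - hF

lemma isCriticalZero_zero_zero (hn : 2 ≤ n) (s : ℂ) : IsCriticalZero F s 0 0 := by
  simp [IsCriticalZero, zero_pow (show n ≠ 0 by omega),
    zero_pow (show n - 1 ≠ 0 by omega)]

lemma isCriticalZero_iff (hC : ∀ s, C s 0 ≠ 0) (hn : 2 ≤ n) (s p q : ℂ) :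
    IsCriticalZero F s p q ↔ p = 0 ∧ q = 0 := by
  constructor
  · intro h
    have hq : q = 0 := pow_eq_zero_iff (by omega) |>.1 (pow_eq_zero_of_isCriticalZero C n h)
    subst hq
    simpa [hC s, show n ≠ 0 by omega] using h.1
  · rintro ⟨rfl, rfl⟩
    exact isCriticalZero_zero_zero C n hn s

end SquareMinusPower

lemma not_isCriticalZero_sq_mul_sub_one (C : ℂ → ℂ → ℂ) (s p q : ℂ) :
    ¬IsCriticalZero (fun s p q => p ^ 2 * C s q - q ^ 0) s p q :=
  fun h => one_ne_zero (pow_eq_zero_of_isCriticalZero C 0 h)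

theorem stmt_5_general (g m : ℕ) (a : ℕ → ℂ)
    (H : ℂ → ℂ → ℂ → ℂ)
    (hH : ∀ s p q, H s p q =
      p ^ 2 * (1 - s * q ^ 2) * (∏ r ∈ Finset.Icc 3 (2 * g + 2), (1 - a r * q)) -
        q ^ (2 * m)) :
    (1 ≤ m → ∀ s p q : ℂ,
      (H s p q = 0 ∧ deriv (fun s' => H s' p q) s = 0 ∧
        deriv (fun p' => H s p' q) p = 0 ∧ deriv (fun q' => H s p q') q = 0) ↔
      (p = 0 ∧ q = 0)) ∧
    (m = 0 → ∀ s p q : ℂ,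
      ¬(H s p q = 0 ∧ deriv (fun s' => H s' p q) s = 0 ∧
        deriv (fun p' => H s p' q) p = 0 ∧ deriv (fun q' => H s p q') q = 0)) := by
  set C : ℂ → ℂ → ℂ := fun s q => (1 - s * q ^ 2) * ∏ r ∈ Finset.Icc 3 (2 * g + 2), (1 - a r * q)
  have hHC : H = fun s p q => p ^ 2 * C s q - q ^ (2 * m) := by
    funext s p q
    rw [hH]
    ring
  have hC : ∀ s, C s 0 ≠ 0 := by simp [C]
  subst hHC
  refine ⟨fun hm => isCriticalZero_iff C (2 * m) hC (by omega), ?_⟩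
  rintro rfl
  exact not_isCriticalZero_sq_mul_sub_one C

/-- The proper transforms of `Y_irr^{(0)}` under successive blow-ups, given by
`p²(1 − s q²)∏_{r=3}^{2g+2}(1 − a_r q) − q^{2m} = 0`: the hypersurface is
singular exactly along `{(s,0,0)}` when `m ≥ 1`, and is smooth when `m = 0`. -/
theorem stmt_5 (g m : ℕ) (hg : 2 ≤ g) (a : ℕ → ℂ)
    (H : ℂ → ℂ → ℂ → ℂ)
    (hH : ∀ s p q, H s p q =
      p ^ 2 * (1 - s * q ^ 2) * (∏ r ∈ Finset.Icc 3 (2 * g + 2), (1 - a r * q)) -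
        q ^ (2 * m)) :
    (1 ≤ m → ∀ s p q : ℂ,
      (H s p q = 0 ∧ deriv (fun s' => H s' p q) s = 0 ∧
        deriv (fun p' => H s p' q) p = 0 ∧ deriv (fun q' => H s p q') q = 0) ↔
      (p = 0 ∧ q = 0)) ∧
    (m = 0 → ∀ s p q : ℂ,
      ¬(H s p q = 0 ∧ deriv (fun s' => H s' p q) s = 0 ∧
        deriv (fun p' => H s p' q) p = 0 ∧ deriv (fun q' => H s p q') q = 0)) :=
  stmt_5_general g m a H hH
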